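/- arXiv:1008.2610 — 6 statements merged into one kernel-verified Lean document; each statement's English description precedes it below -/
import Mathlib

section
/- Let m ≥ 2 and n ≥ 1 be integers and let G be a simple graph on n vertices with Laplacian matrix L(G) and complement graph G^c. Then the Laplacian matrix L(K_m ∨ G) of the join of the complete graph K_m with G is unimodularly equivalent over ℤ to the block diagonal matrix ((m+n)·I_n − L(G^c)) ⊕ (m+n)·I_{m−2} ⊕ I_1 ⊕ 0_1, i.e., there exist integer matrices P and Q with determinant ±1 such that P · L(K_m ∨ G) · Q equals this block diagonal matrix. -/
open Matrix SimpleGraph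

/-- The join of two simple graphs on disjoint vertex sets: all edges of both graphs,
plus all edges between the two vertex sets. -/
def graphJoin {α β : Type*} (G : SimpleGraph α) (H : SimpleGraph β) :
    SimpleGraph (α ⊕ β) where
  Adj x y :=
    match x, y with
    | Sum.inl a, Sum.inl b => G.Adj a b
    | Sum.inr a, Sum.inr b => H.Adj a b
    | _, _ => True
  symm := by
    refine ⟨?_⟩
    rintro (a | a) (b | b) h
    · exact G.adj_symm h
    · trivial
    · trivial
    · exact H.adj_symm h
  loopless := by
    refine ⟨?_⟩
    rintro (a | a) h
    · exact G.ne_of_adj h rfl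
    · exact H.ne_of_adj h rfl

instance graphJoin.adjDecidable {α β : Type*} (G : SimpleGraph α) (H : SimpleGraph β)
    [DecidableRel G.Adj] [DecidableRel H.Adj] :
    DecidableRel (graphJoin G H).Adj := fun x y =>
  match x, y with
  | Sum.inl a, Sum.inl b => (inferInstance : Decidable (G.Adj a b))
  | Sum.inr a, Sum.inr b => (inferInstance : Decidable (H.Adj a b))
  | Sum.inl _, Sum.inr _ => Decidable.isTrue trivial
  | Sum.inr _, Sum.inl _ => Decidable.isTrue trivial

/-- Unimodular equivalence over ℤ of integer matrices (up to a bijection identifying the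
index types): `B = P * A * Q` for integer matrices `P`, `Q` of determinant `±1`. -/
def MatrixUnimodEquiv {ι₁ ι₂ κ₁ κ₂ : Type*}
    [Fintype ι₁] [Fintype ι₂] [Fintype κ₁] [Fintype κ₂]
    [DecidableEq ι₁] [DecidableEq ι₂] [DecidableEq κ₁] [DecidableEq κ₂]
    (A : Matrix ι₁ ι₂ ℤ) (B : Matrix κ₁ κ₂ ℤ) : Prop :=
  ∃ (e₁ : ι₁ ≃ κ₁) (e₂ : ι₂ ≃ κ₂) (P : Matrix κ₁ κ₁ ℤ) (Q : Matrix κ₂ κ₂ ℤ),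
    (P.det = 1 ∨ P.det = -1) ∧ (Q.det = 1 ∨ Q.det = -1) ∧
    P * (Matrix.reindex e₁ e₂ A) * Q = B

/-!
Write `N = m + n` and `J` for the all-ones matrix. Since `(K_m ∨ G)ᶜ` is the disjoint union of
the empty graph and `Gᶜ`, and `L(H) + L(Hᶜ) = N • 1 - J` for every graph `H` on `N` vertices,
`L := L(K_m ∨ G) = N • 1 - J - (0 ⊕ L(Gᶜ))`. Its row and column sums vanish, and off the
diagonal the row and the column of a vertex of `K_m` consist of `-1`s.

Fix vertices `a ≠ b` of `K_m`. Negate row `a`, replace row `b` by the sum of all rows and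
subtract row `a` from every other row; then replace column `a` by the sum of all columns and
subtract column `b` from every other column. What remains vanishes in rows and columns `a`, `b`
except for a `1` at `(a, b)`, and is `L + J = N • 1 - (0 ⊕ L(Gᶜ))` elsewhere: the required block
diagonal matrix, once `a` indexes the `I₁` block among the rows and `b` among the columns.
-/

namespace Matrix

variable {ι R : Type*} [Fintype ι] [DecidableEq ι] [CommRing R]

def elimRow (s : R) (a b x : ι) : ι → R :=
  if x = a then Pi.single a s else if x = b then 1 else Pi.single x 1 - Pi.single a 1

def elimMatrix (s : R) (a b : ι) : Matrix ι ι R := of (elimRow s a b)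

theorem elimMatrix_mul_apply (s : R) (a b : ι) (M : Matrix ι ι R) (x y : ι) :
    (elimMatrix s a b * M) x y =
      if x = a then s * M a y else if x = b then ∑ z, M z y else M x y - M a y := by
  change elimRow s a b x ⬝ᵥ (fun z => M z y) = _
  unfold elimRow
  split_ifs <;> simp [sub_dotProduct, single_dotProduct, one_dotProduct]

theorem mul_transpose_elimMatrix_apply (s : R) (a b : ι) (M : Matrix ι ι R) (x y : ι) :
    (M * (elimMatrix s a b)ᵀ) x y =
      if y = a then s * M x a else if y = b then ∑ z, M x z else M x y - M x a := by
  rw [← transpose_apply (M * _) y x, transpose_mul, transpose_transpose, elimMatrix_mul_apply]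
  simp only [transpose_apply]

theorem det_updateRow_one_one (b : ι) : ((1 : Matrix ι ι R).updateRow b 1).det = 1 := by
  have h : (1 : ι → R) = ∑ k, (1 : R) • (1 : Matrix ι ι R) k := by
    ext j
    rw [Finset.sum_apply]
    simp [one_apply]
  rw [h, det_updateRow_sum, det_one, smul_eq_mul, mul_one]

theorem det_elimMatrix (s : R) {a b : ι} (hab : a ≠ b) : (elimMatrix s a b).det = s := by
  have hrow : elimMatrix (1 : R) a b a = Pi.single a 1 := by
    change elimRow (1 : R) a b a = _
    simp [elimRow]
  have hs : elimMatrix s a b = (elimMatrix 1 a b).updateRow a (s • Pi.single a 1) := by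
    ext x y
    by_cases hx : x = a
    · subst hx
      simp [elimMatrix, elimRow, Pi.single_apply]
    · simp [elimMatrix, elimRow, hx]
  -- adding row `a` to every row `x ∉ {a, b}` gives the identity with row `b` replaced by ones
  have h1 : (elimMatrix (1 : R) a b).det = ((1 : Matrix ι ι R).updateRow b 1).det := by
    refine det_eq_of_forall_row_eq_smul_add_const (fun x => if x = a ∨ x = b then 0 else -1) a
      (by simp) fun x y => ?_
    by_cases hxa : x = a
    · subst hxa
      simp [elimMatrix, elimRow, hab, one_apply, Pi.single_apply, eq_comm]
    by_cases hxb : x = b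
    · subst hxb
      simp [elimMatrix, elimRow, hxa]
    · simp [elimMatrix, elimRow, hxa, hxb, hab, updateRow_apply, one_apply, Pi.single_apply,
        eq_comm, sub_eq_add_neg, neg_ite]
  rw [hs, det_updateRow_smul, ← hrow, updateRow_eq_self, h1, det_updateRow_one_one, mul_one]

theorem sum_elimMatrix_mul_apply_eq_zero (s : R) (a b : ι) {M : Matrix ι ι R}
    (hrow : ∀ x, ∑ y, M x y = 0) (x : ι) : ∑ y, (elimMatrix s a b * M) x y = 0 := by
  simp only [elimMatrix_mul_apply]
  split_ifs
  · rw [← Finset.mul_sum, hrow, mul_zero]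
  · rw [Finset.sum_comm]
    exact Finset.sum_eq_zero fun z _ => hrow z
  · rw [Finset.sum_sub_distrib, hrow, hrow, sub_zero]

theorem elimMatrix_mul_mul_transpose_elimMatrix {a b : ι} (hab : a ≠ b) {M : Matrix ι ι R}
    (hrow : ∀ x, ∑ y, M x y = 0) (hcol : ∀ y, ∑ x, M x y = 0)
    (ha : ∀ y, y ≠ a → M a y = -1) (hb : ∀ x, x ≠ b → M x b = -1) :
    elimMatrix (-1) a b * M * (elimMatrix 1 b a)ᵀ = of fun x y =>
      if x = a ∧ y = b then 1 else if x = a ∨ x = b ∨ y = a ∨ y = b then 0 else M x y + 1 := by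
  ext x y
  rw [mul_transpose_elimMatrix_apply, sum_elimMatrix_mul_apply_eq_zero _ _ _ hrow, of_apply]
  simp only [elimMatrix_mul_apply, hcol]
  have hab' : M a b = -1 := ha b hab.symm
  by_cases hyb : y = b
  · by_cases hxa : x = a
    · simp [hxa, hyb, hab']
    · by_cases hxb : x = b
      · simp [hxb, hyb, hab.symm]
      · simp [hxa, hxb, hyb, hab.symm, hab', hb x hxb]
  by_cases hya : y = a
  · simp [hya, hab]
  by_cases hxa : x = a
  · simp [hxa, hyb, hya, ha y hya, hab']
  by_cases hxb : x = b
  · simp [hxb, hyb, hya, hab.symm]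
  · simp [hxa, hxb, hyb, hya, ha y hya, hb x hxb, hab']

end Matrix

theorem MatrixUnimodEquiv.of_mul_mul_eq {ι₁ ι₂ κ₁ κ₂ : Type*}
    [Fintype ι₁] [Fintype ι₂] [Fintype κ₁] [Fintype κ₂]
    [DecidableEq ι₁] [DecidableEq ι₂] [DecidableEq κ₁] [DecidableEq κ₂]
    {A C : Matrix ι₁ ι₂ ℤ} {B : Matrix κ₁ κ₂ ℤ} (e₁ : ι₁ ≃ κ₁) (e₂ : ι₂ ≃ κ₂)
    {P : Matrix ι₁ ι₁ ℤ} {Q : Matrix ι₂ ι₂ ℤ} (hP : P.det = 1 ∨ P.det = -1)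
    (hQ : Q.det = 1 ∨ Q.det = -1) (h : P * A * Q = C) (hC : reindex e₁ e₂ C = B) :
    MatrixUnimodEquiv A B :=
  ⟨e₁, e₂, reindex e₁ e₁ P, reindex e₂ e₂ Q, by rwa [det_reindex_self],
    by rwa [det_reindex_self], by simp [← hC, ← h, reindex_apply]⟩

namespace SimpleGraph

section Laplacian

variable {V : Type*} [Fintype V] [DecidableEq V] (G : SimpleGraph V) [DecidableRel G.Adj]
  (R : Type*) [Ring R]

theorem sum_lapMatrix_row_eq_zero (x : V) : ∑ y, G.lapMatrix R x y = 0 := by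
  simpa [mulVec, dotProduct] using congrFun (G.lapMatrix_mulVec_const_eq_zero (R := R)) x

theorem sum_lapMatrix_col_eq_zero (y : V) : ∑ x, G.lapMatrix R x y = 0 := by
  simpa only [(G.isSymm_lapMatrix R).apply y] using G.sum_lapMatrix_row_eq_zero R y

theorem lapMatrix_add_lapMatrix_compl :
    G.lapMatrix R + Gᶜ.lapMatrix R = (Fintype.card V : R) • 1 - of 1 := by
  ext i j
  by_cases hij : i = j
  · subst hij
    have hlt := G.degree_lt_card_verts i
    have hdeg : (Gᶜ.degree i : R) = Fintype.card V - 1 - G.degree i := by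
      rw [degree_compl, Nat.cast_sub (by omega), Nat.cast_sub (by omega), Nat.cast_one]
    simp [lapMatrix, degMatrix, hdeg]
  · by_cases hadj : G.Adj i j <;> simp [lapMatrix, degMatrix, hij, hadj, one_apply_ne hij]

theorem lapMatrix_compl_top : (⊤ : SimpleGraph V)ᶜ.lapMatrix R = 0 := by
  ext i j
  simp [lapMatrix, degMatrix]

end Laplacian

section Join

variable {α β : Type*} (H : SimpleGraph α) (G : SimpleGraph β)

@[simp] theorem graphJoin_adj_inl_inl {a b : α} :
    (graphJoin H G).Adj (.inl a) (.inl b) ↔ H.Adj a b :=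
  Iff.rfl

@[simp] theorem graphJoin_adj_inr_inr {a b : β} :
    (graphJoin H G).Adj (.inr a) (.inr b) ↔ G.Adj a b :=
  Iff.rfl

@[simp] theorem graphJoin_adj_inl_inr {a : α} {b : β} : (graphJoin H G).Adj (.inl a) (.inr b) :=
  trivial

@[simp] theorem graphJoin_adj_inr_inl {a : β} {b : α} : (graphJoin H G).Adj (.inr a) (.inl b) :=
  trivial

variable [Fintype α] [Fintype β] [DecidableEq α] [DecidableEq β] [DecidableRel H.Adj]
  [DecidableRel G.Adj] (R : Type*) [Ring R]

theorem degree_compl_graphJoin_inl (i : α) :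
    (graphJoin H G)ᶜ.degree (.inl i) = Hᶜ.degree i := by
  rw [← card_neighborFinset_eq_degree, ← card_neighborFinset_eq_degree,
    show (graphJoin H G)ᶜ.neighborFinset (.inl i) = (Hᶜ.neighborFinset i).map .inl by
      ext (j | j) <;> simp,
    Finset.card_map]

theorem degree_compl_graphJoin_inr (i : β) :
    (graphJoin H G)ᶜ.degree (.inr i) = Gᶜ.degree i := by
  rw [← card_neighborFinset_eq_degree, ← card_neighborFinset_eq_degree,
    show (graphJoin H G)ᶜ.neighborFinset (.inr i) = (Gᶜ.neighborFinset i).map .inr by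
      ext (j | j) <;> simp,
    Finset.card_map]

theorem lapMatrix_compl_graphJoin :
    (graphJoin H G)ᶜ.lapMatrix R = fromBlocks (Hᶜ.lapMatrix R) 0 0 (Gᶜ.lapMatrix R) := by
  ext (i | i) (j | j) <;>
    simp [lapMatrix, degMatrix, degree_compl_graphJoin_inl, degree_compl_graphJoin_inr,
      diagonal_apply]

theorem lapMatrix_graphJoin :
    (graphJoin H G).lapMatrix R = ((Fintype.card α + Fintype.card β : ℕ) : R) • 1 - of 1 -
      fromBlocks (Hᶜ.lapMatrix R) 0 0 (Gᶜ.lapMatrix R) := by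
  rw [← lapMatrix_compl_graphJoin, eq_sub_iff_add_eq, lapMatrix_add_lapMatrix_compl,
    Fintype.card_sum]

theorem lapMatrix_graphJoin_top_apply (x y : α ⊕ β) :
    (graphJoin (⊤ : SimpleGraph α) G).lapMatrix R x y =
      (if x = y then (Fintype.card α + Fintype.card β : R) else 0) -
        fromBlocks 0 0 0 (Gᶜ.lapMatrix R) x y - 1 := by
  rw [lapMatrix_graphJoin, lapMatrix_compl_top, sub_right_comm]
  simp [one_apply]

end Join

end SimpleGraph

theorem lapMatrix_graphJoin_top_unimodEquiv (p n : ℕ) (G : SimpleGraph (Fin n))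
    [DecidableRel G.Adj] :
    MatrixUnimodEquiv ((graphJoin (⊤ : SimpleGraph (Fin (p + 2))) G).lapMatrix ℤ)
      (fromBlocks ((((p + 2 : ℕ) : ℤ) + n) • 1 - Gᶜ.lapMatrix ℤ) 0 0
        (fromBlocks ((((p + 2 : ℕ) : ℤ) + n) • (1 : Matrix (Fin p) (Fin p) ℤ)) 0 0
          (fromBlocks (1 : Matrix (Fin 1) (Fin 1) ℤ) 0 0 (0 : Matrix (Fin 1) (Fin 1) ℤ)))) := by
  obtain ⟨f⟩ : Nonempty (Fin (p + 2) ≃ Fin p ⊕ (Fin 1 ⊕ Fin 1)) :=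
    ⟨Fintype.equivOfCardEq (by simp)⟩
  set a : Fin (p + 2) ⊕ Fin n := .inl (f.symm (.inr (.inl 0)))
  set b : Fin (p + 2) ⊕ Fin n := .inl (f.symm (.inr (.inr 0)))
  have hab : a ≠ b := by simp [a, b]
  have ha : ∀ y, y ≠ a → (graphJoin ⊤ G).lapMatrix ℤ a y = -1 := by
    rintro (j | w) hy <;> simp [lapMatrix_graphJoin_top_apply, a, Ne.symm hy]
  have hb : ∀ x, x ≠ b → (graphJoin ⊤ G).lapMatrix ℤ x b = -1 := by
    rintro (i | v) hx <;> simp [lapMatrix_graphJoin_top_apply, b, hx]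
  -- the rows send `a` to the `I₁` block, the columns send `b` there
  refine MatrixUnimodEquiv.of_mul_mul_eq ((Equiv.sumComm _ _).trans ((Equiv.refl _).sumCongr f))
    ((Equiv.sumComm _ _).trans
      ((Equiv.refl _).sumCongr (f.trans ((Equiv.refl _).sumCongr (Equiv.sumComm _ _)))))
    (.inr (det_elimMatrix (-1) hab)) (.inl ((det_transpose _).trans (det_elimMatrix 1 hab.symm)))
    (elimMatrix_mul_mul_transpose_elimMatrix hab (sum_lapMatrix_row_eq_zero _ _)
      (sum_lapMatrix_col_eq_zero _ _) ha hb) ?_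
  ext (v | i | s | s) (w | j | t | t) <;>
    simp [lapMatrix_graphJoin_top_apply, a, b, one_apply, smul_one_eq_diagonal, diagonal_apply,
      Fin.fin_one_eq_zero]

theorem lap_join_complete_equiv_general (m n : ℕ) (hm : 2 ≤ m)
    (G : SimpleGraph (Fin n)) [DecidableRel G.Adj] :
    MatrixUnimodEquiv
      ((graphJoin (⊤ : SimpleGraph (Fin m)) G).lapMatrix ℤ)
      (Matrix.fromBlocks
        (((m : ℤ) + n) • (1 : Matrix (Fin n) (Fin n) ℤ) - Gᶜ.lapMatrix ℤ) 0 0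
        (Matrix.fromBlocks
          (((m : ℤ) + n) • (1 : Matrix (Fin (m - 2)) (Fin (m - 2)) ℤ)) 0 0
          (Matrix.fromBlocks
            (1 : Matrix (Fin 1) (Fin 1) ℤ) 0 0
            (0 : Matrix (Fin 1) (Fin 1) ℤ)))) := by
  obtain ⟨p, rfl⟩ := Nat.exists_eq_add_of_le' hm
  -- `Fin (p + 2 - 2)` unfolds to `Fin p`
  exact lapMatrix_graphJoin_top_unimodEquiv p n G

/-- Lemma 2.1: `L(K_m ∨ G) ∼ ((m+n)Iₙ − L(Gᶜ)) ⊕ (m+n)I_{m−2} ⊕ I₁ ⊕ 0₁`. -/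
theorem lap_join_complete_equiv (m n : ℕ) (hm : 2 ≤ m) (hn : 1 ≤ n)
    (G : SimpleGraph (Fin n)) [DecidableRel G.Adj] :
    MatrixUnimodEquiv
      ((graphJoin (⊤ : SimpleGraph (Fin m)) G).lapMatrix ℤ)
      (Matrix.fromBlocks
        (((m : ℤ) + n) • (1 : Matrix (Fin n) (Fin n) ℤ) - Gᶜ.lapMatrix ℤ) 0 0
        (Matrix.fromBlocks
          (((m : ℤ) + n) • (1 : Matrix (Fin (m - 2)) (Fin (m - 2)) ℤ)) 0 0
          (Matrix.fromBlocks
            (1 : Matrix (Fin 1) (Fin 1) ℤ) 0 0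
            (0 : Matrix (Fin 1) (Fin 1) ℤ)))) :=
  lap_join_complete_equiv_general m n hm G
end

section
/- Let m ≥ 1 and n ≥ 4 be integers and define the integer sequence (b_l) by b_1 = 0, b_2 = n−2, and b_l = (m+2)b_{l−1} − b_{l−2} + (n−l+1) for l ≥ 3. Then for all 1 ≤ l ≤ n, as real numbers, b_l = e·((m+2+√(m²+4m))/2)^l − f·((m+2−√(m²+4m))/2)^l − (n−l)/m, where e = (m² − m − (m+1)√(m²+4m) + 2mn)(m+4−√(m²+4m)) / (4m²(m+4)) and f = (m − m² − (m+1)√(m²+4m) − 2mn)(m+4+√(m²+4m)) / (4m²(m+4)). -/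
/-!
The numbers `α, β = (m + 2 ± √(m² + 4m)) / 2` are the roots of `x² = (m + 2) x - 1`, so
`e αˡ - f βˡ` solves the homogeneous recurrence, while `-(n - l) / m` is a particular solution
of the inhomogeneous one. The constants `e` and `f` are fitted so that the closed form takes the
values `1` and `0` at `l = 0, 1`; the recurrence then gives `n - 2` at `l = 2`, and a second-order
recurrence is determined by two consecutive values.
-/

theorem eq_of_second_order_recurrence {α : Type*} (F : ℕ → α → α → α) {u v : ℕ → α}
    (hu : ∀ k, u (k + 2) = F k (u k) (u (k + 1))) (hv : ∀ k, v (k + 2) = F k (v k) (v (k + 1)))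
    (h0 : u 0 = v 0) (h1 : u 1 = v 1) : u = v := by
  have pair : ∀ k, u k = v k ∧ u (k + 1) = v (k + 1) := by
    intro k
    induction k with
    | zero => exact ⟨h0, h1⟩
    | succ k ih => exact ⟨ih.2, by rw [hu, hv, ih.1, ih.2]⟩
  exact funext fun k => (pair k).1

theorem pow_add_two_of_sq_eq {R : Type*} [CommSemiring R] {x p q : R} (hx : x ^ 2 = p * x + q)
    (k : ℕ) : x ^ (k + 2) = p * x ^ (k + 1) + q * x ^ k := by
  rw [pow_add, hx]
  ring

noncomputable def coeffE (m n s : ℝ) : ℝ :=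
  (m ^ 2 - m - (m + 1) * s + 2 * m * n) * (m + 4 - s) / (4 * m ^ 2 * (m + 4))

noncomputable def coeffF (m n s : ℝ) : ℝ :=
  (m - m ^ 2 - (m + 1) * s - 2 * m * n) * (m + 4 + s) / (4 * m ^ 2 * (m + 4))

noncomputable def closedForm (m n e f s : ℝ) (l : ℕ) : ℝ :=
  e * ((m + 2 + s) / 2) ^ l - f * ((m + 2 - s) / 2) ^ l - (n - l) / m

section

variable {m n s : ℝ}

theorem closedForm_add_two (e f : ℝ) (hm : m ≠ 0) (hs : s ^ 2 = m ^ 2 + 4 * m) (k : ℕ) :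
    closedForm m n e f s (k + 2) =
      (m + 2) * closedForm m n e f s (k + 1) - closedForm m n e f s k + (n - k - 1) := by
  have hα : ((m + 2 + s) / 2) ^ 2 = (m + 2) * ((m + 2 + s) / 2) + -1 := by
    linear_combination hs / 4
  have hβ : ((m + 2 - s) / 2) ^ 2 = (m + 2) * ((m + 2 - s) / 2) + -1 := by
    linear_combination hs / 4
  simp only [closedForm, pow_add_two_of_sq_eq hα, pow_add_two_of_sq_eq hβ]
  push_cast
  field_simp
  ring

theorem closedForm_coeff_zero (hm : m ≠ 0) (hm4 : m + 4 ≠ 0) (hs : s ^ 2 = m ^ 2 + 4 * m) :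
    closedForm m n (coeffE m n s) (coeffF m n s) s 0 = 1 := by
  have hdiff : coeffE m n s - coeffF m n s = (m + n) / m := by
    rw [coeffE, coeffF, div_sub_div_same, div_eq_div_iff (by simp [hm, hm4]) hm]
    linear_combination 2 * m * (m + 1) * hs
  simp only [closedForm, pow_zero, mul_one, Nat.cast_zero, sub_zero]
  rw [hdiff]
  field_simp
  ring

theorem closedForm_coeff_one (hm : m ≠ 0) (hm4 : m + 4 ≠ 0) (hs : s ^ 2 = m ^ 2 + 4 * m) :
    closedForm m n (coeffE m n s) (coeffF m n s) s 1 = 0 := by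
  have hdiff : coeffE m n s * ((m + 2 + s) / 2) - coeffF m n s * ((m + 2 - s) / 2) =
      (n - 1) / m := by
    rw [coeffE, coeffF]
    field_simp
    linear_combination (-2 * (m ^ 2 - m + 2 * m * n) - 4 * (m + 1)) * hs
  simp only [closedForm, pow_one, Nat.cast_one]
  rw [hdiff, sub_self]

theorem closedForm_coeff_two (hm : m ≠ 0) (hm4 : m + 4 ≠ 0) (hs : s ^ 2 = m ^ 2 + 4 * m) :
    closedForm m n (coeffE m n s) (coeffF m n s) s 2 = n - 2 := by
  rw [closedForm_add_two _ _ hm hs 0, closedForm_coeff_one hm hm4 hs,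
    closedForm_coeff_zero hm hm4 hs]
  push_cast
  ring

end

theorem b_closed_form_general (m n : ℕ) (hm : 1 ≤ m) (b : ℕ → ℤ)
    (hb1 : b 1 = 0) (hb2 : b 2 = (n : ℤ) - 2)
    (hb : ∀ l, 3 ≤ l → b l = ((m : ℤ) + 2) * b (l - 1) - b (l - 2) + ((n : ℤ) - l + 1))
    (e f : ℝ)
    (he : e = ((m : ℝ) ^ 2 - m - (m + 1) * Real.sqrt ((m : ℝ) ^ 2 + 4 * m) + 2 * m * n) *
        ((m : ℝ) + 4 - Real.sqrt ((m : ℝ) ^ 2 + 4 * m)) / (4 * (m : ℝ) ^ 2 * (m + 4)))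
    (hf : f = ((m : ℝ) - m ^ 2 - (m + 1) * Real.sqrt ((m : ℝ) ^ 2 + 4 * m) - 2 * m * n) *
        ((m : ℝ) + 4 + Real.sqrt ((m : ℝ) ^ 2 + 4 * m)) / (4 * (m : ℝ) ^ 2 * (m + 4))) :
    ∀ l, 1 ≤ l → l ≤ n →
      (b l : ℝ) =
        e * (((m : ℝ) + 2 + Real.sqrt ((m : ℝ) ^ 2 + 4 * m)) / 2) ^ l -
          f * (((m : ℝ) + 2 - Real.sqrt ((m : ℝ) ^ 2 + 4 * m)) / 2) ^ l -
          ((n : ℝ) - l) / m := by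
  have hm0 : (m : ℝ) ≠ 0 := by positivity
  have hm4 : (m : ℝ) + 4 ≠ 0 := by positivity
  set s := Real.sqrt ((m : ℝ) ^ 2 + 4 * m)
  have hs : s ^ 2 = (m : ℝ) ^ 2 + 4 * m := Real.sq_sqrt (by positivity)
  set C := closedForm m n (coeffE m n s) (coeffF m n s) s
  -- `b 0` is unconstrained, so the two sequences are compared from index `1` on.
  have shifted : (fun k => (b (k + 1) : ℝ)) = fun k => C (k + 1) := by
    refine eq_of_second_order_recurrence (fun (k : ℕ) (x y : ℝ) => (m + 2) * y - x + (n - k - 2))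
      (fun k => ?_) (fun k => ?_) (by simp [C, hb1, closedForm_coeff_one hm0 hm4 hs]) ?_
    · have h := hb (k + 3) (by omega)
      rw [show k + 3 - 1 = k + 2 by omega, show k + 3 - 2 = k + 1 by omega] at h
      show (b (k + 3) : ℝ) = (m + 2) * b (k + 2) - b (k + 1) + (n - k - 2)
      rw [h]
      push_cast
      ring
    · simp only [C, closedForm_add_two _ _ hm0 hs (k + 1)]
      push_cast
      ring
    · simp [C, hb2, closedForm_coeff_two hm0 hm4 hs]
  intro l hl _
  obtain ⟨k, rfl⟩ := Nat.exists_eq_add_of_le' hl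
  subst he hf
  exact congrFun shifted k

/-- The closed form of the sequence `b₁ = 0`, `b₂ = n−2`,
`b_l = (m+2)b_{l−1} − b_{l−2} + (n−l+1)`:
for `1 ≤ l ≤ n`, `b_l = e·((m+2+√(m²+4m))/2)^l − f·((m+2−√(m²+4m))/2)^l − (n−l)/m`. -/
theorem b_closed_form (m n : ℕ) (hm : 1 ≤ m) (hn : 4 ≤ n) (b : ℕ → ℤ)
    (hb1 : b 1 = 0) (hb2 : b 2 = (n : ℤ) - 2)
    (hb : ∀ l, 3 ≤ l → b l = ((m : ℤ) + 2) * b (l - 1) - b (l - 2) + ((n : ℤ) - l + 1))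
    (e f : ℝ)
    (he : e = ((m : ℝ) ^ 2 - m - (m + 1) * Real.sqrt ((m : ℝ) ^ 2 + 4 * m) + 2 * m * n) *
        ((m : ℝ) + 4 - Real.sqrt ((m : ℝ) ^ 2 + 4 * m)) / (4 * (m : ℝ) ^ 2 * (m + 4)))
    (hf : f = ((m : ℝ) - m ^ 2 - (m + 1) * Real.sqrt ((m : ℝ) ^ 2 + 4 * m) - 2 * m * n) *
        ((m : ℝ) + 4 + Real.sqrt ((m : ℝ) ^ 2 + 4 * m)) / (4 * (m : ℝ) ^ 2 * (m + 4))) :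
    ∀ l, 1 ≤ l → l ≤ n →
      (b l : ℝ) =
        e * (((m : ℝ) + 2 + Real.sqrt ((m : ℝ) ^ 2 + 4 * m)) / 2) ^ l -
          f * (((m : ℝ) + 2 - Real.sqrt ((m : ℝ) ^ 2 + 4 * m)) / 2) ^ l -
          ((n : ℝ) - l) / m :=
  b_closed_form_general m n hm b hb1 hb2 hb e f he hf
end

section
/- For all integers m ≥ 1 and n ≥ 1, the product ∏_{j=1}^{n−1} ( m + 2 + 2·cos(πj/n) ) equals (1 / (2^n · √(m²+4m))) · ( (m+2+√(m²+4m))^n − (m+2−√(m²+4m))^n ). -/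
/-!
The numbers `cos (jπ/n)`, `0 < j < n`, are the `n - 1` roots of the Chebyshev polynomial
`U_{n-1}`, whose leading coefficient is `2^(n-1)`; together with the parity of `U_{n-1}` this
turns the product into `U_{n-1}((m+2)/2)`. Splitting `m + 2 = a + b` with `a b = 1`, i.e.
`a, b = (m + 2 ± √(m² + 4m))/2`, the three-term recurrence of `U` gives
`U_{n-1}((a+b)/2) (a - b) = aⁿ - bⁿ`.
-/

open Real Finset

namespace Polynomial.Chebyshev

theorem U_eval_mul_sub_eq_pow_sub_pow {R : Type*} [CommRing R] {a b x : R} (hab : a * b = 1)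
    (hx : a + b = 2 * x) (n : ℕ) :
    (U R n).eval x * (a - b) = a ^ (n + 1) - b ^ (n + 1) := by
  induction n using Nat.twoStepInduction with
  | zero => simp
  | one =>
    simp only [Nat.cast_one, U_one, eval_mul, eval_ofNat, eval_X]
    linear_combination (a - b) * hx.symm
  | more n ih₁ ih₂ =>
    push_cast at ih₁ ih₂ ⊢
    rw [U_add_two, eval_sub, eval_mul, eval_mul, eval_X, eval_ofNat]
    linear_combination 2 * x * ih₂ - ih₁ + (a ^ (n + 1) - b ^ (n + 1)) * hab
      - (a ^ (n + 2) - b ^ (n + 2)) * hx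

theorem U_real_eq_C_mul_prod (n : ℕ) :
    U ℝ n = Polynomial.C (2 ^ n) *
      ∏ k ∈ range n, (X - Polynomial.C (cos ((k + 1) * π / (n + 1)))) := by
  have hroots : (U ℝ n).roots =
      (Multiset.range n).map fun k : ℕ ↦ cos ((k + 1) * π / (n + 1)) := by
    rw [roots_U_real, Finset.image_val]
    exact Multiset.dedup_eq_self.mpr (roots_U_real_nodup n)
  have hcard : Multiset.card (U ℝ n).roots = (U ℝ n).natDegree := by
    rw [hroots, Multiset.card_map, Multiset.card_range, natDegree_U_natCast]
  rw [← C_leadingCoeff_mul_prod_multiset_X_sub_C hcard, leadingCoeff_U_natCast, hroots,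
    Multiset.map_map]
  rfl

theorem prod_add_two_mul_cos_eq_eval_U (n : ℕ) (x : ℝ) :
    ∏ k ∈ range n, (x + 2 * cos ((k + 1) * π / (n + 1))) = (U ℝ n).eval (x / 2) := by
  have h := congrArg (eval (-(x / 2))) (U_real_eq_C_mul_prod n)
  simp only [eval_mul, Polynomial.eval_C, eval_prod, eval_sub, eval_X, U_eval_neg,
    Int.cast_negOnePow_natCast] at h
  calc ∏ k ∈ range n, (x + 2 * cos ((k + 1) * π / (n + 1)))
      = ∏ k ∈ range n, ((-1) * 2 * (-(x / 2) - cos ((k + 1) * π / (n + 1)))) :=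
        prod_congr rfl fun k _ ↦ by ring
    _ = (-1) ^ n * (2 ^ n * ∏ k ∈ range n, (-(x / 2) - cos ((k + 1) * π / (n + 1)))) := by
        rw [prod_mul_distrib, prod_const, card_range, mul_pow, mul_assoc]
    _ = (U ℝ n).eval (x / 2) := by
        rw [← h, ← mul_assoc, ← pow_add, Even.neg_one_pow ⟨n, rfl⟩, one_mul]

end Polynomial.Chebyshev

open Polynomial Polynomial.Chebyshev

/-- Equation (2.7): `∏_{j=1}^{n−1}(m+2+2cos(πj/n))
= (1/(2ⁿ√(m²+4m)))·((m+2+√(m²+4m))ⁿ − (m+2−√(m²+4m))ⁿ)`. -/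
theorem prod_cos_eq (m n : ℕ) (hm : 1 ≤ m) (hn : 1 ≤ n) :
    (∏ j ∈ Finset.Icc 1 (n - 1), ((m : ℝ) + 2 + 2 * Real.cos (Real.pi * j / n))) =
      (1 / (2 ^ n * Real.sqrt ((m : ℝ) ^ 2 + 4 * m))) *
        (((m : ℝ) + 2 + Real.sqrt ((m : ℝ) ^ 2 + 4 * m)) ^ n -
          ((m : ℝ) + 2 - Real.sqrt ((m : ℝ) ^ 2 + 4 * m)) ^ n) := by
  obtain ⟨k, rfl⟩ : ∃ k, n = k + 1 := ⟨n - 1, by omega⟩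
  set s := √((m : ℝ) ^ 2 + 4 * m)
  have hs : s ^ 2 = (m : ℝ) ^ 2 + 4 * m := sq_sqrt (by positivity)
  have hs₀ : 0 < s := sqrt_pos.mpr (by have : (1 : ℝ) ≤ m := mod_cast hm; positivity)
  have hprod : ∏ j ∈ Icc 1 (k + 1 - 1), ((m : ℝ) + 2 + 2 * cos (π * j / (k + 1 : ℕ)))
      = (U ℝ k).eval (((m : ℝ) + 2) / 2) := by
    rw [Nat.add_sub_cancel, ← prod_add_two_mul_cos_eq_eval_U, range_eq_Ico,
      ← Ico_add_one_right_eq_Icc, ← prod_Ico_add' _ 0 k 1]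
    refine prod_congr rfl fun j _ ↦ ?_
    push_cast
    ring_nf
  have hU := U_eval_mul_sub_eq_pow_sub_pow (a := (m + 2 + s) / 2) (b := (m + 2 - s) / 2)
    (x := ((m : ℝ) + 2) / 2) (by linear_combination -hs / 4) (by ring) k
  rw [hprod, one_div_mul_eq_div, eq_div_iff (by positivity),
    show (m : ℝ) + 2 + s = 2 * ((m + 2 + s) / 2) by ring,
    show (m : ℝ) + 2 - s = 2 * ((m + 2 - s) / 2) by ring, mul_pow, mul_pow]
  linear_combination 2 ^ (k + 1) * hU
end

section
/- Let n ≥ 1 be an integer and define integer sequences p_k, q_k by p_0 = n+3, q_0 = 0, p_k = (n+2)p_{k−1} + q_{k−1} and q_k = 1 − p_{k−1} for k ≥ 1. Then for all k ≥ 0, as real numbers, p_k = (x+y)·((n+2+√(n²+4n))/2)^k + (x−y)·((n+2−√(n²+4n))/2)^k − 1/n, where x = (n²+3n+1)/(2n) and y = (n²+5n+5)/(2√(n²+4n)). -/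
/-! Eliminating `q` gives `p (k+2) = (n+2) p (k+1) - p k + 1`, so `p k + 1/n` satisfies the
homogeneous recurrence with characteristic polynomial `X² - (n+2) X + 1`, whose roots are
`(n + 2 ± √(n² + 4n)) / 2`. The coefficients `x ± y` are fixed by `p 0` and `p 1`. -/

theorem eq_of_twoStep_recurrence {α : Type*} (F : α → α → α) {f g : ℕ → α}
    (hf : ∀ k, f (k + 2) = F (f (k + 1)) (f k)) (hg : ∀ k, g (k + 2) = F (g (k + 1)) (g k))
    (h0 : f 0 = g 0) (h1 : f 1 = g 1) : f = g := by
  funext k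
  induction k using Nat.twoStepInduction with
  | zero => exact h0
  | one => exact h1
  | more k ih0 ih1 => rw [hf, hg, ih0, ih1]

section CommRing

variable {R : Type*} [CommRing R]

theorem add_two_eq_of_coupled {a : R} {p q : ℕ → R}
    (hp : ∀ k, p (k + 1) = a * p k + q k) (hq : ∀ k, q (k + 1) = 1 - p k) (k : ℕ) :
    p (k + 2) = a * p (k + 1) - p k + 1 := by
  rw [hp (k + 1), hq k]
  ring

theorem geom_combination_add_two {a b c d α β A B : R}
    (hα : α ^ 2 = a * α - b) (hβ : β ^ 2 = a * β - b) (hc : c = a * c - b * c + d) (k : ℕ) :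
    A * α ^ (k + 2) + B * β ^ (k + 2) + c =
      a * (A * α ^ (k + 1) + B * β ^ (k + 1) + c) - b * (A * α ^ k + B * β ^ k + c) + d := by
  linear_combination (A * α ^ k) * hα + (B * β ^ k) * hβ + hc

end CommRing

theorem sq_half_add_eq_of_sq_eq_discrim {K : Type*} [Field K] [CharZero K] {a b s : K}
    (hs : s ^ 2 = a ^ 2 - 4 * b) : ((a + s) / 2) ^ 2 = a * ((a + s) / 2) - b := by
  linear_combination hs / 4

theorem sq_half_sub_eq_of_sq_eq_discrim {K : Type*} [Field K] [CharZero K] {a b s : K}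
    (hs : s ^ 2 = a ^ 2 - 4 * b) : ((a - s) / 2) ^ 2 = a * ((a - s) / 2) - b := by
  linear_combination hs / 4

/-- The closed form of the sequence `p₀ = n+3`, `q₀ = 0`,
`p_k = (n+2)p_{k−1} + q_{k−1}`, `q_k = 1 − p_{k−1}`:
`p_k = (x+y)((n+2+√(n²+4n))/2)^k + (x−y)((n+2−√(n²+4n))/2)^k − 1/n`,
where `x = (n²+3n+1)/(2n)` and `y = (n²+5n+5)/(2√(n²+4n))`. -/
theorem p_closed_form (n : ℕ) (hn : 1 ≤ n) (p q : ℕ → ℤ)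
    (hp0 : p 0 = (n : ℤ) + 3) (hq0 : q 0 = 0)
    (hp : ∀ k, 1 ≤ k → p k = ((n : ℤ) + 2) * p (k - 1) + q (k - 1))
    (hq : ∀ k, 1 ≤ k → q k = 1 - p (k - 1))
    (x y : ℝ)
    (hx : x = ((n : ℝ) ^ 2 + 3 * n + 1) / (2 * n))
    (hy : y = ((n : ℝ) ^ 2 + 5 * n + 5) / (2 * Real.sqrt ((n : ℝ) ^ 2 + 4 * n))) :
    ∀ k : ℕ,
      (p k : ℝ) =
        (x + y) * (((n : ℝ) + 2 + Real.sqrt ((n : ℝ) ^ 2 + 4 * n)) / 2) ^ k +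
          (x - y) * (((n : ℝ) + 2 - Real.sqrt ((n : ℝ) ^ 2 + 4 * n)) / 2) ^ k -
          1 / n := by
  have hn0 : (n : ℝ) ≠ 0 := by positivity
  set s := Real.sqrt ((n : ℝ) ^ 2 + 4 * n)
  have hs : s ^ 2 = ((n : ℝ) + 2) ^ 2 - 4 * 1 := by
    rw [Real.sq_sqrt (by positivity)]
    ring
  have hs0 : s ≠ 0 := (Real.sqrt_pos.2 (by positivity)).ne'
  have hα := sq_half_add_eq_of_sq_eq_discrim hs
  have hβ := sq_half_sub_eq_of_sq_eq_discrim hs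
  have hc : -(1 / (n : ℝ)) = (n + 2) * -(1 / n) - 1 * -(1 / n) + 1 := by
    field_simp
    ring
  have hp' (k : ℕ) : (p (k + 1) : ℝ) = (n + 2) * p k + q k := by
    exact_mod_cast hp (k + 1) k.succ_pos
  have hq' (k : ℕ) : (q (k + 1) : ℝ) = 1 - p k := by
    exact_mod_cast hq (k + 1) k.succ_pos
  refine congrFun (eq_of_twoStep_recurrence (fun u v => ((n : ℝ) + 2) * u - v + 1)
    (f := fun k => (p k : ℝ))
    (add_two_eq_of_coupled (q := fun k => (q k : ℝ)) hp' hq') (fun k => ?_) ?_ ?_)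
  · linear_combination geom_combination_add_two (A := x + y) (B := x - y) hα hβ hc k
  · simp only [hp0, hx, hy]
    push_cast
    field_simp
    ring
  · simp only [hp' 0, hp0, hq0, hx, hy]
    push_cast
    field_simp
    ring
end

section
/- Let m ≥ 4 and n ≥ 5 be integers, and define p'_{m−2} via the integer recurrence p_0 = n+3, q_0 = 0, p_k = (n+2)p_{k−1} + q_{k−1}, q_k = 1 − p_{k−1} for k ≥ 1, and p'_{m−2} = (n+1)p_{m−3} − p_{m−4} + 1. Then, as real numbers, p'_{m−2} = (1/√(n²+4n)) · ( ((n+2+√(n²+4n))/2)^m − ((n+2−√(n²+4n))/2)^m ). -/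
/-!
Writing `c = n + 2`, the substitution `q_{k+1} = 1 - p_k` turns the coupled recurrence into
`p_{k+2} = c p_{k+1} - p_k + 1`, and the combination `w_j = (c - 1) p_{j+1} - p_j + 1` then
satisfies the homogeneous recurrence `w_{j+2} = c w_{j+1} - w_j` of the Lucas sequence
`U_k(c, 1)`. Comparing two initial values gives `p'_{m-2} = w_{m-4} = U_m`, and Binet's formula
for `U_m`, with roots `(c ± √(c² - 4))/2` of `x² - c x + 1`, is the claimed closed form.
-/

/-- The Lucas sequence `U_k(c, 1)`. -/
def lucasU (c : ℤ) : ℕ → ℤ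
  | 0 => 0
  | 1 => 1
  | k + 2 => c * lucasU c (k + 1) - lucasU c k

theorem eq_of_add_two_eq_mul_sub {R : Type*} [CommRing R] {c : R} {x y : ℕ → R}
    (hx : ∀ k, x (k + 2) = c * x (k + 1) - x k) (hy : ∀ k, y (k + 2) = c * y (k + 1) - y k)
    (h0 : x 0 = y 0) (h1 : x 1 = y 1) : x = y := by
  have h : ∀ k, x k = y k ∧ x (k + 1) = y (k + 1) := by
    intro k
    induction k with
    | zero => exact ⟨h0, h1⟩
    | succ k ih => exact ⟨ih.2, by rw [hx, hy, ih.1, ih.2]⟩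
  exact funext fun k => (h k).1

theorem lucasU_mul_sub {R : Type*} [CommRing R] (c : ℤ) {α β : R} (hsum : α + β = c)
    (hprod : α * β = 1) (k : ℕ) : (lucasU c k : R) * (α - β) = α ^ k - β ^ k := by
  refine congrFun (eq_of_add_two_eq_mul_sub (c := (c : R))
    (x := fun k => (lucasU c k : R) * (α - β)) (y := fun k => α ^ k - β ^ k)
    (fun k => ?_) (fun k => ?_) (by simp [lucasU]) (by simp [lucasU])) k
  · simp only [lucasU]
    push_cast
    ring
  · linear_combination (α ^ (k + 1) - β ^ (k + 1)) * hsum - (α ^ k - β ^ k) * hprod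

theorem lucasU_eq_closed_form {c : ℤ} (hc : 4 < c ^ 2) (k : ℕ) :
    (lucasU c k : ℝ) = (1 / √((c : ℝ) ^ 2 - 4)) *
      ((((c : ℝ) + √((c : ℝ) ^ 2 - 4)) / 2) ^ k - (((c : ℝ) - √((c : ℝ) ^ 2 - 4)) / 2) ^ k) := by
  have hdisc : (0 : ℝ) < (c : ℝ) ^ 2 - 4 := by
    rw [sub_pos]
    exact_mod_cast hc
  have hsq : √((c : ℝ) ^ 2 - 4) ^ 2 = (c : ℝ) ^ 2 - 4 := Real.sq_sqrt hdisc.le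
  have hbinet := lucasU_mul_sub c (α := ((c : ℝ) + √((c : ℝ) ^ 2 - 4)) / 2)
    (β := ((c : ℝ) - √((c : ℝ) ^ 2 - 4)) / 2) (by ring) (by linear_combination -hsq / 4) k
  rw [← hbinet]
  field_simp [(Real.sqrt_pos.mpr hdisc).ne']
  ring

theorem add_two_eq_mul_sub_add_one_of_coupled {c : ℤ} {p q : ℕ → ℤ}
    (hp : ∀ k, 1 ≤ k → p k = c * p (k - 1) + q (k - 1))
    (hq : ∀ k, 1 ≤ k → q k = 1 - p (k - 1)) (k : ℕ) :
    p (k + 2) = c * p (k + 1) - p k + 1 := by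
  have hpk : p (k + 2) = c * p (k + 1) + q (k + 1) := hp (k + 2) (by omega)
  have hqk : q (k + 1) = 1 - p k := hq (k + 1) (by omega)
  rw [hpk, hqk]
  ring

/-- The combination `(c - 1) p_{k+1} - p_k + 1` kills the inhomogeneous term. -/
theorem combination_add_two_eq_mul_sub {c : ℤ} {p : ℕ → ℤ}
    (hp : ∀ k, p (k + 2) = c * p (k + 1) - p k + 1) (k : ℕ) :
    (c - 1) * p (k + 3) - p (k + 2) + 1 =
      c * ((c - 1) * p (k + 2) - p (k + 1) + 1) - ((c - 1) * p (k + 1) - p k + 1) := by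
  rw [hp (k + 1), hp k]
  ring

/-- The closed form of `p'_{m−2} = (n+1)p_{m−3} − p_{m−4} + 1`, where `p₀ = n+3`, `q₀ = 0`,
`p_k = (n+2)p_{k−1} + q_{k−1}`, `q_k = 1 − p_{k−1}`:
`p'_{m−2} = (1/√(n²+4n))·(((n+2+√(n²+4n))/2)^m − ((n+2−√(n²+4n))/2)^m)`. -/
theorem p'_closed_form (m n : ℕ) (hm : 4 ≤ m) (hn : 5 ≤ n) (p q : ℕ → ℤ)
    (hp0 : p 0 = (n : ℤ) + 3) (hq0 : q 0 = 0)
    (hp : ∀ k, 1 ≤ k → p k = ((n : ℤ) + 2) * p (k - 1) + q (k - 1))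
    (hq : ∀ k, 1 ≤ k → q k = 1 - p (k - 1))
    (p' : ℤ) (hp' : p' = ((n : ℤ) + 1) * p (m - 3) - p (m - 4) + 1) :
    (p' : ℝ) =
      (1 / Real.sqrt ((n : ℝ) ^ 2 + 4 * n)) *
        ((((n : ℝ) + 2 + Real.sqrt ((n : ℝ) ^ 2 + 4 * n)) / 2) ^ m -
          (((n : ℝ) + 2 - Real.sqrt ((n : ℝ) ^ 2 + 4 * n)) / 2) ^ m) := by
  obtain ⟨j, rfl⟩ : ∃ j, m = j + 4 := ⟨m - 4, by omega⟩
  have hrec := add_two_eq_mul_sub_add_one_of_coupled hp hq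
  have hp1 : p 1 = ((n : ℤ) + 2) * p 0 + q 0 := hp 1 le_rfl
  have hw : p' = lucasU ((n : ℤ) + 2) (j + 4) := by
    have h := congrFun (eq_of_add_two_eq_mul_sub
      (x := fun j => ((n : ℤ) + 2 - 1) * p (j + 1) - p j + 1)
      (y := fun j => lucasU ((n : ℤ) + 2) (j + 4))
      (combination_add_two_eq_mul_sub hrec) (fun _ => rfl) ?_ ?_) j
    · rw [hp', show j + 4 - 3 = j + 1 by omega, Nat.add_sub_cancel, ← h]
      ring
    · simp only [lucasU, hp1, hp0, hq0]
      ring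
    · simp only [lucasU, hrec 0, hp1, hp0, hq0]
      ring
  have hc : (4 : ℤ) < ((n : ℤ) + 2) ^ 2 := by
    have h5 : (5 : ℤ) ≤ n := mod_cast hn
    nlinarith
  have hdisc : (((n : ℤ) + 2 : ℤ) : ℝ) ^ 2 - 4 = (n : ℝ) ^ 2 + 4 * n := by push_cast; ring
  rw [hw, lucasU_eq_closed_form hc, hdisc]
  push_cast
  ring
end

section
/- For all integers m ≥ 1 and n ≥ 1, the double product ∏_{i=1}^{m−1} ( n + 2 + 2·cos(πi/m) ) · ∏_{j=1}^{n−1} ( m + 2 + 2·cos(πj/n) ) equals ( ((n+2+√(n²+4n))^m − (n+2−√(n²+4n))^m) · ((m+2+√(m²+4m))^n − (m+2−√(m²+4m))^n) ) / ( 2^{m+n} · √((n²+4n)(m²+4m)) ). -/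
/-!
With `ζ = exp (π i / m)` a primitive `2m`-th root of unity, `x ^ (2m) - y ^ (2m)` is the product of
the factors `x + ζ ^ k y` over `k < 2m`. The factors `k = 0` and `k = m` give `x ^ 2 - y ^ 2`, and
pairing `k` with `2m - k` gives `x ^ 2 + y ^ 2 + 2 x y cos (π k / m)`. For `c > 2`, choosing
`x ^ 2, y ^ 2 = (c ± √(c ^ 2 - 4)) / 2`, so that `x y = 1` and `x ^ 2 + y ^ 2 = c`, evaluates
`∏ (c + 2 cos (π k / m))` in closed form; `c = n + 2` and `c = m + 2` give the two products.
-/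

open Complex Finset
open scoped Real

theorem IsPrimitiveRoot.pow_sub_pow_eq_prod_range {R : Type*} [CommRing R] [IsDomain R] {ζ : R}
    {n : ℕ} (hζ : IsPrimitiveRoot ζ n) (hn : 0 < n) (x y : R) :
    x ^ n - y ^ n = ∏ i ∈ range n, (x - ζ ^ i * y) := by
  simpa [Polynomial.eval_prod] using
    congrArg (Polynomial.eval x) (X_pow_sub_C_eq_prod hζ hn (rfl : y ^ n = y ^ n))

theorem Finset.prod_range_two_mul_eq_mul_prod_Ico_mul_reflect {M : Type*} [CommMonoid M]
    (f : ℕ → M) {m : ℕ} (hm : 0 < m) :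
    ∏ k ∈ range (2 * m), f k = f 0 * f m * ∏ k ∈ Ico 1 m, f k * f (2 * m - k) := by
  have hreflect : ∏ k ∈ Ico 1 m, f (2 * m - k) = ∏ k ∈ Ico (m + 1) (2 * m), f k := by
    rw [prod_Ico_reflect f 1 (by omega : m ≤ 2 * m + 1)]
    congr 2; omega
  rw [prod_mul_distrib, hreflect, range_eq_Ico, prod_eq_prod_Ico_succ_bot (by omega),
    ← prod_Ico_consecutive _ (by omega : 1 ≤ m) (by omega : m ≤ 2 * m),
    prod_eq_prod_Ico_succ_bot (by omega : m < 2 * m)]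
  simp only [mul_assoc, mul_left_comm]

theorem Complex.add_exp_mul_add_exp_neg_mul (x y θ : ℂ) :
    (x + exp (θ * I) * y) * (x + exp (-(θ * I)) * y) = x ^ 2 + y ^ 2 + 2 * x * y * cos θ := by
  have h : exp (θ * I) * exp (-(θ * I)) = 1 := by rw [← exp_add, add_neg_cancel, exp_zero]
  rw [cos, neg_mul]
  linear_combination y ^ 2 * h

theorem Complex.sq_sub_sq_mul_prod_add_two_mul_cos {m : ℕ} (hm : 0 < m) (x y : ℂ) :
    (x ^ 2 - y ^ 2) * ∏ k ∈ Ico 1 m, (x ^ 2 + y ^ 2 + 2 * x * y * cos (π * k / m)) =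
      x ^ (2 * m) - y ^ (2 * m) := by
  have hm' : (m : ℂ) ≠ 0 := by exact_mod_cast hm.ne'
  set E := exp (π * I / m)
  have hE : IsPrimitiveRoot E (2 * m) := by
    convert isPrimitiveRoot_exp (2 * m) (by omega) using 2
    push_cast
    field_simp
  have hEpow (k : ℕ) : E ^ k = exp (π * k / m * I) := by
    rw [← exp_nat_mul]
    ring_nf
  have hEm : E ^ m = -1 := by
    rw [hEpow, mul_div_cancel_right₀ _ hm', exp_pi_mul_I]
  have hpair : ∀ k ∈ Ico 1 m, (x - E ^ k * -y) * (x - E ^ (2 * m - k) * -y) =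
      x ^ 2 + y ^ 2 + 2 * x * y * cos (π * k / m) := by
    intro k hk
    have hinv : E ^ (2 * m - k) = exp (-(π * k / m * I)) := by
      rw [exp_neg, ← hEpow]
      refine eq_inv_of_mul_eq_one_left ?_
      rw [← pow_add, Nat.sub_add_cancel (by simp at hk; omega), hE.pow_eq_one]
    rw [hEpow, hinv, ← add_exp_mul_add_exp_neg_mul]
    ring
  calc (x ^ 2 - y ^ 2) * ∏ k ∈ Ico 1 m, (x ^ 2 + y ^ 2 + 2 * x * y * cos (π * k / m))
      = (x - E ^ 0 * -y) * (x - E ^ m * -y) *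
          ∏ k ∈ Ico 1 m, (x - E ^ k * -y) * (x - E ^ (2 * m - k) * -y) := by
        rw [prod_congr rfl hpair, pow_zero, hEm]
        ring
    _ = x ^ (2 * m) - (-y) ^ (2 * m) := by
        rw [hE.pow_sub_pow_eq_prod_range (by omega),
          prod_range_two_mul_eq_mul_prod_Ico_mul_reflect _ hm]
    _ = x ^ (2 * m) - y ^ (2 * m) := by rw [(even_two_mul m).neg_pow]

theorem Real.sq_sub_sq_mul_prod_add_two_mul_cos {m : ℕ} (hm : 0 < m) (x y : ℝ) :
    (x ^ 2 - y ^ 2) * ∏ k ∈ Ico 1 m, (x ^ 2 + y ^ 2 + 2 * x * y * Real.cos (π * k / m)) =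
      x ^ (2 * m) - y ^ (2 * m) := by
  exact_mod_cast Complex.sq_sub_sq_mul_prod_add_two_mul_cos hm x y

theorem Real.prod_Icc_add_two_mul_cos {m : ℕ} (hm : 0 < m) {c : ℝ} (hc : 2 < c) :
    ∏ i ∈ Icc 1 (m - 1), (c + 2 * Real.cos (π * i / m)) =
      ((c + √(c ^ 2 - 4)) ^ m - (c - √(c ^ 2 - 4)) ^ m) / (2 ^ m * √(c ^ 2 - 4)) := by
  set s := √(c ^ 2 - 4)
  have hs2 : s ^ 2 = c ^ 2 - 4 := Real.sq_sqrt (by nlinarith)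
  have hs : 0 < s := Real.sqrt_pos.mpr (by nlinarith)
  have hsc : s < c := by nlinarith
  have ha : 0 ≤ (c + s) / 2 := by linarith
  have hb : 0 ≤ (c - s) / 2 := by linarith
  have hab : √((c + s) / 2) * √((c - s) / 2) = 1 := by
    rw [← Real.sqrt_mul ha, show (c + s) / 2 * ((c - s) / 2) = 1 by linear_combination -hs2 / 4,
      Real.sqrt_one]
  have hsum : (c + s) / 2 + (c - s) / 2 = c := by ring
  have hdiff : (c + s) / 2 - (c - s) / 2 = s := by ring
  have key := Real.sq_sub_sq_mul_prod_add_two_mul_cos hm √((c + s) / 2) √((c - s) / 2)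
  simp only [pow_mul, Real.sq_sqrt ha, Real.sq_sqrt hb, mul_assoc (2 : ℝ) √((c + s) / 2), hab,
    mul_one, hsum, hdiff, div_pow, ← sub_div] at key
  rw [Icc_sub_one_right_eq_Ico_of_not_isMin (by simpa using hm.ne'), eq_div_iff (by positivity)]
  rw [eq_div_iff (by positivity)] at key
  linear_combination key

/-- Equation (3.3):
`∏_{i=1}^{m−1}(n+2+2cos(πi/m)) · ∏_{j=1}^{n−1}(m+2+2cos(πj/n))
= ((n+2+√(n²+4n))^m − (n+2−√(n²+4n))^m)((m+2+√(m²+4m))^n − (m+2−√(m²+4m))^n)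
  / (2^{m+n}√((n²+4n)(m²+4m)))`. -/
theorem double_prod_cos_eq (m n : ℕ) (hm : 1 ≤ m) (hn : 1 ≤ n) :
    (∏ i ∈ Finset.Icc 1 (m - 1), ((n : ℝ) + 2 + 2 * Real.cos (Real.pi * i / m))) *
      (∏ j ∈ Finset.Icc 1 (n - 1), ((m : ℝ) + 2 + 2 * Real.cos (Real.pi * j / n))) =
      ((((n : ℝ) + 2 + Real.sqrt ((n : ℝ) ^ 2 + 4 * n)) ^ m -
          ((n : ℝ) + 2 - Real.sqrt ((n : ℝ) ^ 2 + 4 * n)) ^ m) *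
        (((m : ℝ) + 2 + Real.sqrt ((m : ℝ) ^ 2 + 4 * m)) ^ n -
          ((m : ℝ) + 2 - Real.sqrt ((m : ℝ) ^ 2 + 4 * m)) ^ n)) /
      (2 ^ (m + n) * Real.sqrt (((n : ℝ) ^ 2 + 4 * n) * ((m : ℝ) ^ 2 + 4 * m))) := by
  have hprod {p q : ℕ} (hp : 0 < p) (hq : 0 < q) :
      ∏ i ∈ Icc 1 (p - 1), ((q : ℝ) + 2 + 2 * Real.cos (π * i / p)) =
        (((q : ℝ) + 2 + √((q : ℝ) ^ 2 + 4 * q)) ^ p - ((q : ℝ) + 2 - √((q : ℝ) ^ 2 + 4 * q)) ^ p) /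
          (2 ^ p * √((q : ℝ) ^ 2 + 4 * q)) := by
    have hc : (2 : ℝ) < q + 2 := by simpa using hq
    rw [Real.prod_Icc_add_two_mul_cos hp hc, show ((q : ℝ) + 2) ^ 2 - 4 = q ^ 2 + 4 * q by ring]
  rw [hprod hm hn, hprod hn hm, div_mul_div_comm, Real.sqrt_mul (by positivity), pow_add]
  ring
end
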